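/- If μ ≤^{h'} ν and ν is h'-complete (where h' is the jump of h), then G(μ ⊕ μ₁, ν, h) ≡ G(μ₁, ν, h) for every numbering μ₁, i.e. the two numberings are reducible to each other by total computable functions. -/

import Mathlib

/-- Relativized partial recursiveness: `f` is partial recursive in the (total) oracle `O`. -/
inductive RecursiveInOrc (O : ℕ → ℕ) : (ℕ →. ℕ) → Prop
  | oracle : RecursiveInOrc O O
  | zero : RecursiveInOrc O (pure 0)
  | succ : RecursiveInOrc O Nat.succ
  | left : RecursiveInOrc O ↑fun n : ℕ => n.unpair.1
  | right : RecursiveInOrc O ↑fun n : ℕ => n.unpair.2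
  | pair {f g} : RecursiveInOrc O f → RecursiveInOrc O g →
      RecursiveInOrc O fun n => Nat.pair <$> f n <*> g n
  | comp {f g} : RecursiveInOrc O f → RecursiveInOrc O g → RecursiveInOrc O fun n => g n >>= f
  | prec {f g} : RecursiveInOrc O f → RecursiveInOrc O g → RecursiveInOrc O (Nat.unpaired fun a n =>
      n.rec (f a) fun y IH => do let i ← IH; g (Nat.pair a (Nat.pair y i)))
  | rfind {f} : RecursiveInOrc O f →
      RecursiveInOrc O fun a => Nat.rfind fun n => (fun m => m = 0) <$> f (Nat.pair a n)

/-- Computable (many-one style) reducibility between numberings. -/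
def NumRed {S : Type*} (μ ν : ℕ → S) : Prop :=
  ∃ f : ℕ → ℕ, Computable f ∧ ∀ n, μ n = ν (f n)

/-- Reducibility between numberings via an `O`-computable total function. -/
def NumRedIn {S : Type*} (O : ℕ → ℕ) (μ ν : ℕ → S) : Prop :=
  ∃ f : ℕ → ℕ, RecursiveInOrc O ↑f ∧ ∀ n, μ n = ν (f n)

/-- The join `μ ⊕ ν` of two numberings. -/
def NumJoin {S : Type*} (μ ν : ℕ → S) : ℕ → S :=
  fun n => if n % 2 = 0 then μ (n / 2) else ν (n / 2)

/-- `ν` is `O`-precomplete: every `O`-partial computable function has a total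
computable `ν`-totalizer. -/
def Precomplete {S : Type*} (O : ℕ → ℕ) (ν : ℕ → S) : Prop :=
  ∀ ψ : ℕ →. ℕ, RecursiveInOrc O ψ →
    ∃ t : ℕ → ℕ, Computable t ∧ ∀ (x : ℕ) (hx : (ψ x).Dom), ν (t x) = ν ((ψ x).get hx)

/-- `ν` is `O`-complete with respect to `a`. -/
def CompleteAt {S : Type*} (O : ℕ → ℕ) (ν : ℕ → S) (a : S) : Prop :=
  ∀ ψ : ℕ →. ℕ, RecursiveInOrc O ψ →
    ∃ t : ℕ → ℕ, Computable t ∧ (∀ (x : ℕ) (hx : (ψ x).Dom), ν (t x) = ν ((ψ x).get hx)) ∧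
      ∀ x : ℕ, ¬ (ψ x).Dom → ν (t x) = a

open Classical in
/-- The jump (halting problem) of a partial function `U`, as a 0-1 valued total function. -/
noncomputable def jumpOf (U : ℕ →. ℕ) : ℕ → ℕ :=
  fun x => if (U x).Dom then 1 else 0

open Classical in
/-- The operation `G(μ,ν,h)` defined from a universal `h`-partial computable function `U`:
`G⟨n,x⟩ = ν n` if `U x` diverges and `μ (U x)` if it converges. -/
noncomputable def GOp {S : Type*} (μ ν : ℕ → S) (U : ℕ →. ℕ) : ℕ → S :=
  fun m =>
    if hd : (U (Nat.unpair m).2).Dom then μ ((U (Nat.unpair m).2).get hd)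
    else ν (Nat.unpair m).1

/-!
The reduction `G(μ₁) ≤ G(μ ⊕ μ₁)` only re-routes: an `h`-index for `x ↦ 2 · U x + 1` sends every
convergent value of `U` into the odd (`μ₁`) half of the join. For `G(μ ⊕ μ₁) ≤ G(μ₁)`, an index
for `x ↦ (U x - 1) / 2`, undefined when `U x` is even, keeps the `μ₁`-values in place and makes
the inputs with `U x = 2k` divergent, so their first coordinate must now name `ν (g k) = μ k`,
where `g` reduces `μ` to `ν` relative to the jump. The jump decides convergence of `U` and
computes its values, so this choice of first coordinate, `evenBranchIndex U g`, is
jump-computable; precompleteness of `ν` replaces it by a computable function with the same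
`ν`-values.
-/

namespace RecursiveInOrc

variable {O : ℕ → ℕ}

theorem of_partrec {f : ℕ →. ℕ} (hf : Nat.Partrec f) : RecursiveInOrc O f := by
  induction hf with
  | zero => exact .zero
  | succ => exact .succ
  | left => exact .left
  | right => exact .right
  | pair _ _ ih₁ ih₂ => exact .pair ih₁ ih₂
  | comp _ _ ih₁ ih₂ => exact .comp ih₁ ih₂
  | prec _ _ ih₁ ih₂ => exact .prec ih₁ ih₂
  | rfind _ ih => exact .rfind ih

theorem of_computable {f : ℕ → ℕ} (hf : Computable f) : RecursiveInOrc O ↑f :=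
  of_partrec (Partrec.nat_iff.1 hf)

theorem trans {h : ℕ → ℕ} {f : ℕ →. ℕ} (hf : RecursiveInOrc h f) (hh : RecursiveInOrc O ↑h) :
    RecursiveInOrc O f := by
  induction hf with
  | oracle => exact hh
  | zero => exact .zero
  | succ => exact .succ
  | left => exact .left
  | right => exact .right
  | pair _ _ ih₁ ih₂ => exact .pair ih₁ ih₂
  | comp _ _ ih₁ ih₂ => exact .comp ih₁ ih₂
  | prec _ _ ih₁ ih₂ => exact .prec ih₁ ih₂
  | rfind _ ih => exact .rfind ih

theorem comp_total {f g : ℕ → ℕ} (hf : RecursiveInOrc O ↑f) (hg : RecursiveInOrc O ↑g) :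
    RecursiveInOrc O ↑(fun n => f (g n)) :=
  (funext fun _ => Part.bind_some _ _ : _ = (↑(fun n => f (g n)) : ℕ →. ℕ)) ▸ hf.comp hg

theorem pair_total {f g : ℕ → ℕ} (hf : RecursiveInOrc O ↑f) (hg : RecursiveInOrc O ↑g) :
    RecursiveInOrc O ↑(fun n => Nat.pair (f n) (g n)) := by
  have hpair : (fun n => Nat.pair <$> (f : ℕ →. ℕ) n <*> (g : ℕ →. ℕ) n) =
      (↑(fun n => Nat.pair (f n) (g n)) : ℕ →. ℕ) := by
    funext n
    simp [Seq.seq]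
  exact hpair ▸ hf.pair hg

theorem comp₂_total {c : ℕ → ℕ → ℕ} {f g : ℕ → ℕ} (hc : Computable₂ c)
    (hf : RecursiveInOrc O ↑f) (hg : RecursiveInOrc O ↑g) :
    RecursiveInOrc O ↑(fun n => c (f n) (g n)) := by
  have hc' : Computable fun p : ℕ => c p.unpair.1 p.unpair.2 :=
    hc.comp (Computable.fst.comp Computable.unpair) (Computable.snd.comp Computable.unpair)
  simpa using (of_computable hc').comp_total (hf.pair_total hg)

theorem ite_total {p : ℕ → Prop} [DecidablePred p] (hp : PrimrecPred p) {a b c : ℕ → ℕ}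
    (ha : RecursiveInOrc O ↑a) (hb : RecursiveInOrc O ↑b) (hc : RecursiveInOrc O ↑c) :
    RecursiveInOrc O ↑(fun n => if p (a n) then b n else c n) := by
  have hsel : Computable₂ fun (k y : ℕ) => if p k then y.unpair.1 else y.unpair.2 :=
    (Primrec.ite (hp.comp Primrec.fst) (Primrec.fst.comp (Primrec.unpair.comp Primrec.snd))
      (Primrec.snd.comp (Primrec.unpair.comp Primrec.snd))).to_comp
  simpa using comp₂_total hsel ha (hb.pair_total hc)

end RecursiveInOrc

theorem CompleteAt.precomplete {S : Type*} {O : ℕ → ℕ} {ν : ℕ → S} {a : S}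
    (hν : CompleteAt O ν a) : Precomplete O ν :=
  fun ψ hψ => (hν ψ hψ).imp fun _ ht => ⟨ht.1, ht.2.1⟩

theorem Precomplete.exists_computable_of_total {S : Type*} {O : ℕ → ℕ} {ν : ℕ → S}
    (hν : Precomplete O ν) {ψ : ℕ → ℕ} (hψ : RecursiveInOrc O ↑ψ) :
    ∃ t : ℕ → ℕ, Computable t ∧ ∀ x, ν (t x) = ν (ψ x) :=
  (hν ψ hψ).imp fun _ ht => ⟨ht.1, fun x => ht.2 x trivial⟩

theorem jumpOf_eq_one_iff {U : ℕ →. ℕ} {x : ℕ} : jumpOf U x = 1 ↔ (U x).Dom := by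
  unfold jumpOf
  split_ifs <;> simp [*]

theorem exists_total_extension {O : ℕ → ℕ} {U : ℕ →. ℕ} (hU : RecursiveInOrc O U)
    (hJ : RecursiveInOrc O ↑(jumpOf U)) {x₀ : ℕ} (hx₀ : (U x₀).Dom) :
    ∃ v : ℕ → ℕ, RecursiveInOrc O ↑v ∧ ∀ x (hx : (U x).Dom), v x = (U x).get hx := by
  set d : ℕ → ℕ := fun x => if jumpOf U x = 1 then x else x₀
  have hd : RecursiveInOrc O ↑d :=
    RecursiveInOrc.ite_total (p := (· = 1)) (Primrec.eq.comp Primrec.id (Primrec.const 1)) hJ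
      (.of_computable Computable.id) (.of_computable (Computable.const x₀))
  have hd_dom : ∀ x, (U (d x)).Dom := fun x => by
    by_cases hx : jumpOf U x = 1
    · simpa [d, hx] using jumpOf_eq_one_iff.1 hx
    · simpa [d, hx] using hx₀
  have hd_eq : ∀ x, (U x).Dom → d x = x := fun x hx => if_pos (jumpOf_eq_one_iff.2 hx)
  refine ⟨fun x => (U (d x)).get (hd_dom x), ?_, fun x hx => by simp only [hd_eq x hx]⟩
  have hUd : (fun n => (d : ℕ →. ℕ) n >>= U) =
      (↑(fun x => (U (d x)).get (hd_dom x)) : ℕ →. ℕ) :=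
    funext fun x => (Part.bind_some _ _).trans (Part.some_get _).symm
  exact hUd ▸ hU.comp hd

open Classical in
noncomputable def evenBranchIndex (U : ℕ →. ℕ) (g : ℕ → ℕ) (m : ℕ) : ℕ :=
  if h : (U m.unpair.2).Dom then
    if (U m.unpair.2).get h % 2 = 0 then g ((U m.unpair.2).get h / 2) else m.unpair.1
  else m.unpair.1

theorem recursiveInOrc_evenBranchIndex {O : ℕ → ℕ} {U : ℕ →. ℕ} {g : ℕ → ℕ}
    (hU : RecursiveInOrc O U) (hJ : RecursiveInOrc O ↑(jumpOf U)) {x₀ : ℕ} (hx₀ : (U x₀).Dom)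
    (hg : RecursiveInOrc O ↑g) : RecursiveInOrc O ↑(evenBranchIndex U g) := by
  obtain ⟨v, hv, hvU⟩ := exists_total_extension hU hJ hx₀
  have hval : evenBranchIndex U g = fun m =>
      if jumpOf U m.unpair.2 = 1 then
        if v m.unpair.2 % 2 = 0 then g (v m.unpair.2 / 2) else m.unpair.1
      else m.unpair.1 := by
    funext m
    by_cases hd : (U m.unpair.2).Dom
    · simp [evenBranchIndex, hd, jumpOf_eq_one_iff.2 hd, hvU _ hd]
    · simp [evenBranchIndex, hd, mt jumpOf_eq_one_iff.1 hd]
  have hv₂ : RecursiveInOrc O ↑(fun m : ℕ => v m.unpair.2) := hv.comp_total .right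
  have hhalf : RecursiveInOrc O ↑(fun m : ℕ => m / 2) :=
    .of_computable (Primrec.nat_div.comp Primrec.id (Primrec.const 2)).to_comp
  rw [hval]
  exact .ite_total (p := (· = 1)) (Primrec.eq.comp Primrec.id (Primrec.const 1))
    (hJ.comp_total .right)
    (.ite_total (p := (· % 2 = 0))
      (Primrec.eq.comp (Primrec.nat_mod.comp Primrec.id (Primrec.const 2)) (Primrec.const 0))
      hv₂ (hg.comp_total (hhalf.comp_total hv₂)) .left)
    .left

theorem NumJoin_two_mul {S : Type*} (μ μ₁ : ℕ → S) (k : ℕ) : NumJoin μ μ₁ (2 * k) = μ k := by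
  simp [NumJoin]

theorem NumJoin_two_mul_add_one {S : Type*} (μ μ₁ : ℕ → S) (k : ℕ) :
    NumJoin μ μ₁ (2 * k + 1) = μ₁ k := by
  simp [NumJoin, Nat.add_mod, Nat.add_div]

def oddHalf : ℕ →. ℕ := fun y => ↑(if y % 2 = 1 then some (y / 2) else none)

theorem oddHalf_partrec : Nat.Partrec oddHalf :=
  Partrec.nat_iff.1 <| Computable.ofOption <| Primrec.to_comp <|
    Primrec.ite (Primrec.eq.comp (Primrec.nat_mod.comp Primrec.id (Primrec.const 2))
      (Primrec.const 1))
      (Primrec.option_some.comp (Primrec.nat_div.comp Primrec.id (Primrec.const 2)))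
      (Primrec.const none)

theorem oddHalf_two_mul (k : ℕ) : oddHalf (2 * k) = Part.none := by
  simp [oddHalf]

theorem oddHalf_two_mul_add_one (k : ℕ) : oddHalf (2 * k + 1) = Part.some k := by
  simp [oddHalf, Nat.add_mod, Nat.add_div]

theorem exists_index_bind {h : ℕ → ℕ} {U φ : ℕ →. ℕ} (hU : RecursiveInOrc h U)
    (huniv : ∀ ψ : ℕ →. ℕ, RecursiveInOrc h ψ → ∃ e : ℕ, ∀ x, ψ x = U (Nat.pair e x))
    (hφ : RecursiveInOrc h φ) : ∃ e, ∀ x, U (Nat.pair e x) = U x >>= φ :=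
  (huniv _ (hφ.comp hU)).imp fun _ he x => (he x).symm

section GOp

variable {S : Type*} {μ μ₁ ν : ℕ → S} {U : ℕ →. ℕ}

theorem GOp_pair_of_eq_some {n x y : ℕ} (h : U x = Part.some y) :
    GOp μ ν U (Nat.pair n x) = μ y := by
  simp [GOp, h]

theorem GOp_pair_of_eq_none {n x : ℕ} (h : U x = Part.none) :
    GOp μ ν U (Nat.pair n x) = ν n := by
  simp [GOp, h]

theorem GOp_pair_congr_left {a b x : ℕ} (hab : ν a = ν b) :
    GOp μ ν U (Nat.pair a x) = GOp μ ν U (Nat.pair b x) := by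
  rcases (U x).eq_none_or_eq_some with hx | ⟨y, hx⟩
  · rw [GOp_pair_of_eq_none hx, GOp_pair_of_eq_none hx, hab]
  · rw [GOp_pair_of_eq_some hx, GOp_pair_of_eq_some hx]

theorem GOp_pair_eq_GOp_pair_map {μ' : ℕ → S} {f : ℕ → ℕ} (hf : ∀ y, μ' (f y) = μ y) {e : ℕ}
    (he : ∀ x, U (Nat.pair e x) = U x >>= (f : ℕ →. ℕ)) (n x : ℕ) :
    GOp μ ν U (Nat.pair n x) = GOp μ' ν U (Nat.pair n (Nat.pair e x)) := by
  rcases (U x).eq_none_or_eq_some with hx | ⟨y, hx⟩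
  · have hex : U (Nat.pair e x) = Part.none := by
      rw [he, hx]; exact Part.bind_none _
    rw [GOp_pair_of_eq_none hx, GOp_pair_of_eq_none hex]
  · have hex : U (Nat.pair e x) = Part.some (f y) := by
      rw [he, hx]; exact Part.bind_some _ _
    rw [GOp_pair_of_eq_some hx, GOp_pair_of_eq_some hex, hf]

theorem GOp_join_pair_eq {g : ℕ → ℕ} (hg : ∀ k, μ k = ν (g k)) {e : ℕ}
    (he : ∀ x, U (Nat.pair e x) = U x >>= oddHalf) (n x : ℕ) :
    GOp (NumJoin μ μ₁) ν U (Nat.pair n x) =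
      GOp μ₁ ν U (Nat.pair (evenBranchIndex U g (Nat.pair n x)) (Nat.pair e x)) := by
  rcases (U x).eq_none_or_eq_some with hx | ⟨y, hx⟩
  · have hex : U (Nat.pair e x) = Part.none := by
      rw [he, hx]; exact Part.bind_none _
    have hidx : evenBranchIndex U g (Nat.pair n x) = n := by simp [evenBranchIndex, hx]
    rw [GOp_pair_of_eq_none hx, hidx, GOp_pair_of_eq_none hex]
  obtain ⟨k, rfl | rfl⟩ := Nat.even_or_odd' y
  · have hex : U (Nat.pair e x) = Part.none := by
      rw [he, hx]; exact (Part.bind_some _ _).trans (oddHalf_two_mul k)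
    have hidx : evenBranchIndex U g (Nat.pair n x) = g k := by simp [evenBranchIndex, hx]
    rw [GOp_pair_of_eq_some hx, hidx, GOp_pair_of_eq_none hex, NumJoin_two_mul, hg]
  · have hex : U (Nat.pair e x) = Part.some k := by
      rw [he, hx]; exact (Part.bind_some _ _).trans (oddHalf_two_mul_add_one k)
    rw [GOp_pair_of_eq_some hx, GOp_pair_of_eq_some hex, NumJoin_two_mul_add_one]

end GOp

theorem computable_pair_pair_const {t : ℕ → ℕ} (ht : Computable t) (e : ℕ) :
    Computable fun m => Nat.pair (t m) (Nat.pair e m.unpair.2) :=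
  Primrec₂.natPair.to_comp.comp ht
    (Primrec₂.natPair.comp (Primrec.const e) (Primrec.snd.comp Primrec.unpair)).to_comp

/-- if `μ ≤^{h'} ν` and `ν` is `h'`-complete (`h' = jumpOf U` the jump of `h`,
with `U` the universal `h`-partial computable function), then
`G(μ ⊕ μ₁, ν, h) ≡ G(μ₁, ν, h)`. -/
theorem GOp_absorb {S : Type*} (h : ℕ → ℕ) (U : ℕ →. ℕ)
    (hU : RecursiveInOrc h U)
    (huniv : ∀ ψ : ℕ →. ℕ, RecursiveInOrc h ψ → ∃ e : ℕ, ∀ x, ψ x = U (Nat.pair e x))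
    (hh : RecursiveInOrc (jumpOf U) ↑h)
    (μ μ₁ ν : ℕ → S)
    (hred : NumRedIn (jumpOf U) μ ν)
    (hcomp : ∃ s : S, CompleteAt (jumpOf U) ν s) :
    NumRed (GOp (NumJoin μ μ₁) ν U) (GOp μ₁ ν U) ∧
      NumRed (GOp μ₁ ν U) (GOp (NumJoin μ μ₁) ν U) := by
  obtain ⟨g, hg, hμν⟩ := hred
  obtain ⟨s, hν⟩ := hcomp
  obtain ⟨e₀, he₀⟩ := huniv (pure 0) .zero
  have hdom : (U (Nat.pair e₀ 0)).Dom := by rw [← he₀]; trivial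
  obtain ⟨t, ht, hνt⟩ := hν.precomplete.exists_computable_of_total
    (recursiveInOrc_evenBranchIndex (hU.trans hh) .oracle hdom hg)
  obtain ⟨e₁, he₁⟩ := exists_index_bind hU huniv (.of_partrec oddHalf_partrec)
  obtain ⟨e₂, he₂⟩ := exists_index_bind hU huniv (.of_computable (f := fun y => 2 * y + 1)
    (Primrec.succ.comp (Primrec.nat_mul.comp (Primrec.const 2) Primrec.id)).to_comp)
  constructor
  · refine ⟨_, computable_pair_pair_const ht e₁, fun m => ?_⟩
    obtain ⟨n, x, rfl⟩ : ∃ n x, m = Nat.pair n x := ⟨_, _, (Nat.pair_unpair m).symm⟩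
    rw [Nat.unpair_pair, GOp_join_pair_eq hμν he₁, GOp_pair_congr_left (hνt _).symm]
  · refine ⟨_, computable_pair_pair_const (Computable.fst.comp Computable.unpair) e₂,
      fun m => ?_⟩
    obtain ⟨n, x, rfl⟩ : ∃ n x, m = Nat.pair n x := ⟨_, _, (Nat.pair_unpair m).symm⟩
    rw [Nat.unpair_pair]
    exact GOp_pair_eq_GOp_pair_map (NumJoin_two_mul_add_one μ μ₁) he₂ n x
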